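/- Let Γ = Π ⋊ G act on the set U(G,Π) of functions G → Π by ((σ,g)·f)(x) = (g • f(g⁻¹x)) · σ⁻¹. For a subgroup Λ of Γ with Λ ∩ Π = {e} (so Λ = Λ_α for a crossed homomorphism α : H → Π), the Λ-fixed point set U(G,Π)^Λ is nonempty. -/

import Mathlib

/-!
A function `f : G → P` is the same as the section `x ↦ ((f x)⁻¹, x)` of `P ⋊ G → G`, and under
this identification the action of `P ⋊ G` becomes left multiplication. Since `Λ` meets `P`
trivially, an element of `Λ` is determined by its `G`-component, so `Λ` maps isomorphically onto
its image `H` in `G`. A `Λ`-invariant section is then obtained by translating, by `Λ`, one chosen point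
over a representative of each right coset `H x`.
-/

open SemidirectProduct

namespace SemidirectProduct

variable {N G : Type*} [Group N] [Group G] {φ : G →* MulAut N} {Λ : Subgroup (N ⋊[φ] G)}

theorem eq_of_mem_of_right_eq (hΛ : ∀ n : N, inl n ∈ Λ → n = 1) {a b : N ⋊[φ] G}
    (ha : a ∈ Λ) (hb : b ∈ Λ) (h : a.right = b.right) : a = b := by
  have hright : (a * b⁻¹).right = 1 := by simp [h]
  have hinl : inl (a * b⁻¹).left = a * b⁻¹ := by
    rw [← inl_left_mul_inr_right (a * b⁻¹), hright]
    simp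
  have hleft : (a * b⁻¹).left = 1 := hΛ _ (hinl ▸ mul_mem ha (inv_mem hb))
  rw [← mul_inv_eq_one, ← hinl, hleft, map_one]

theorem exists_section_mul_eq (hΛ : ∀ n : N, inl n ∈ Λ → n = 1) :
    ∃ s : G → N ⋊[φ] G, (∀ x, (s x).right = x) ∧
      ∀ p ∈ Λ, ∀ x, p * s (p.right⁻¹ * x) = s x := by
  set H : Subgroup G := Λ.map rightHom
  let r : G → G := fun x => (Quotient.mk (QuotientGroup.rightRel H) x).out
  have hr_mem (x : G) : x * (r x)⁻¹ ∈ H :=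
    QuotientGroup.rightRel_apply.mp (Quotient.mk_out (s := QuotientGroup.rightRel H) x)
  have hr_mul (g x : G) (hg : g ∈ H) : r (g * x) = r x := by
    refine congrArg Quotient.out (Quotient.sound (QuotientGroup.rightRel_apply.mpr ?_))
    simpa using inv_mem hg
  choose l hlΛ hl_right using hr_mem
  simp only [rightHom_eq_right] at hl_right
  refine ⟨fun x => l x * inr (r x), fun x => by simp [hl_right], fun p hp x => ?_⟩
  have hpr : p.right⁻¹ ∈ H := inv_mem ⟨p, hp, rfl⟩
  have hl : p * l (p.right⁻¹ * x) = l x :=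
    eq_of_mem_of_right_eq hΛ (mul_mem hp (hlΛ _)) (hlΛ x) (by
      rw [mul_right, hl_right, hl_right, hr_mul _ _ hpr, ← mul_assoc,
        mul_inv_cancel_left])
  rw [← mul_assoc, hl, hr_mul _ _ hpr]

end SemidirectProduct

theorem stmt9 {G P : Type*} [Group G] [Group P] (φ : G →* MulAut P)
    (Λ : Subgroup (P ⋊[φ] G))
    (hΛ : ∀ σ : P, SemidirectProduct.inl σ ∈ Λ → σ = 1) :
    ∃ f : G → P, ∀ p ∈ Λ,
      (fun x => φ p.right (f (p.right⁻¹ * x)) * p.left⁻¹) = f := by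
  obtain ⟨s, -, hs⟩ := exists_section_mul_eq hΛ
  refine ⟨fun x => (s x).left⁻¹, fun p hp => funext fun x => ?_⟩
  have h := congrArg SemidirectProduct.left (hs p hp x)
  rw [mul_left] at h
  rw [← h, mul_inv_rev, map_inv]
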